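/- Let Ω be a measurable space, μ a probability measure on Ω, 𝒞 a concept class on Ω, and ε > 0. Suppose B₁,…,B_k are measurable subsets of Ω forming an ε/2-cover of 𝒞 in L¹(μ), i.e., for every C ∈ 𝒞 there is j with μ(C Δ B_j) ≤ ε/2. Let L be a minimal empirical risk rule over {B₁,…,B_k} with sample size m: on input a labeled sample ((x₁,l₁),…,(x_m,l_m)) ∈ (Ω × {0,1})^m, L outputs some B_j minimizing the empirical error |{i : χ_{B_j}(x_i) ≠ l_i}|. Then for every δ ∈ (0,1) and every natural number m ≥ (32/ε)·ln(k/δ), the rule L is PAC for 𝒞 under μ to accuracy ε with confidence 1 − δ. -/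

import Mathlib

open MeasureTheory Filter

/-- The `n`-fold product (i.i.d.) measure on `Fin n → Ω`. -/
noncomputable def prodMeas {Ω : Type*} [MeasurableSpace Ω] (μ : Measure Ω) (n : ℕ) :
    Measure (Fin n → Ω) := Measure.pi fun _ => μ

/-- The sample `x` labeled by the concept `C`. -/
noncomputable def labeled {Ω : Type*} (C : Set Ω) {m : ℕ} (x : Fin m → Ω) :
    Fin m → Ω × Bool := fun i => (x i, @decide (x i ∈ C) (Classical.propDecidable _))

/-- `L` is PAC for `𝒞` under `μ` to accuracy `ε` with confidence `1 - δ`. -/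
def IsPAC {Ω : Type*} [MeasurableSpace Ω] (μ : Measure Ω) (𝒞 : Set (Set Ω)) (m : ℕ)
    (L : (Fin m → Ω × Bool) → Set Ω) (ε δ : ℝ) : Prop :=
  ∀ C ∈ 𝒞, prodMeas μ m
    {x | ε < (μ (symmDiff (L (labeled C x)) C)).toReal} ≤ ENNReal.ofReal δ

/-- Empirical error of the hypothesis `B` on the labeled sample `s`:
the number of indices where the label of `B` disagrees with the sample label. -/
noncomputable def empErr {Ω : Type*} {m : ℕ} (B : Set Ω) (s : Fin m → Ω × Bool) : ℕ :=
  (Finset.univ.filter fun i =>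
    (@decide ((s i).1 ∈ B) (Classical.propDecidable _)) ≠ (s i).2).card

/-!
Fix `C ∈ 𝒞` and a cover element `B j₀` with `μ (B j₀ ∆ C) ≤ ε / 2`. On a sample labeled by `C`,
the empirical error of `B j` is the number of sample points in `B j ∆ C`, a binomial count with
success probability `μ (B j ∆ C)`. If the rule outputs some `B j` with `μ (B j ∆ C) > ε`, then
either `B j₀` makes at least `3εm/4` errors or `B j` makes at most `3εm/4` errors. Chernoff bounds
(exponential moments at `t = 1/2` and `t = -3/10`) bound each of these `k` events by
`exp (-εm/32)`, and `k exp (-εm/32) ≤ δ` by the choice of `m`.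
-/

open scoped symmDiff
open ProbabilityTheory

lemma exp_half_sub_one_le : Real.exp (1 / 2) - 1 ≤ 11 / 16 := by
  have hsq : Real.exp (1 / 2) * Real.exp (1 / 2) = Real.exp 1 := by
    rw [← Real.exp_add]; norm_num
  nlinarith [Real.exp_one_lt_d9, Real.exp_pos (1 / 2)]

lemma exp_neg_three_tenths_sub_one_le : Real.exp (-(3 / 10)) - 1 ≤ -41 / 160 := by
  have h : (160 / 119 : ℝ) ≤ Real.exp (3 / 10) :=
    le_trans (by norm_num [Finset.sum_range_succ, Nat.factorial])
      (Real.sum_le_exp_of_nonneg (by norm_num : (0 : ℝ) ≤ 3 / 10) 4)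
  rw [Real.exp_neg]
  have := inv_anti₀ (by norm_num) h
  norm_num at this
  linarith

lemma mul_exp_neg_le_of_log_div_le {n δ x : ℝ} (hn : 0 < n) (hδ : 0 < δ)
    (h : Real.log (n / δ) ≤ x) : n * Real.exp (-x) ≤ δ := by
  rw [Real.exp_neg, ← div_eq_mul_inv, div_le_iff₀ (Real.exp_pos x), ← div_le_iff₀' hδ]
  exact (Real.log_le_iff_le_exp (div_pos hn hδ)).mp h

section SampleCount

variable {Ω : Type*}

open scoped Classical in
noncomputable def sampleCount (D : Set Ω) {m : ℕ} (x : Fin m → Ω) : ℕ :=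
  (Finset.univ.filter fun i => x i ∈ D).card

lemma exp_mul_sampleCount (D : Set Ω) (t : ℝ) {m : ℕ} (x : Fin m → Ω) :
    Real.exp (t * sampleCount D x)
      = ∏ i, (1 + D.indicator (fun _ => Real.exp t - 1) (x i)) := by
  classical
  rw [sampleCount, Finset.natCast_card_filter, Finset.mul_sum, Real.exp_sum]
  refine Finset.prod_congr rfl fun i _ => ?_
  by_cases h : x i ∈ D <;> simp [h]

lemma empErr_labeled (A C : Set Ω) {m : ℕ} (x : Fin m → Ω) :
    empErr A (labeled C x) = sampleCount (A ∆ C) x := by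
  classical
  rw [empErr, sampleCount]
  congr 1
  refine Finset.filter_congr fun i _ => ?_
  by_cases hA : x i ∈ A <;> by_cases hC : x i ∈ C <;>
    simp [labeled, Set.mem_symmDiff, hA, hC]

variable [MeasurableSpace Ω] {μ : Measure Ω} [IsProbabilityMeasure μ] {D : Set Ω}

lemma integrable_exp_mul_sampleCount (hD : MeasurableSet D) (t : ℝ) (m : ℕ) :
    Integrable (fun x => Real.exp (t * sampleCount D x)) (prodMeas μ m) := by
  simp_rw [exp_mul_sampleCount]
  exact Integrable.fintype_prod fun _ =>
    (integrable_const (1 : ℝ)).add ((integrable_const _).indicator hD)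

lemma mgf_sampleCount (hD : MeasurableSet D) (t : ℝ) (m : ℕ) :
    mgf (fun x => (sampleCount D x : ℝ)) (prodMeas μ m) t
      = (1 + (Real.exp t - 1) * μ.real D) ^ m := by
  simp_rw [mgf, exp_mul_sampleCount]
  refine (integral_fintype_prod_eq_pow
    (fun ω => 1 + D.indicator (fun _ => Real.exp t - 1) ω)).trans ?_
  rw [integral_add (integrable_const 1) ((integrable_const _).indicator hD),
    integral_indicator_const _ hD]
  simp [mul_comm]

lemma mgf_sampleCount_le (hD : MeasurableSet D) (t : ℝ) (m : ℕ) :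
    mgf (fun x => (sampleCount D x : ℝ)) (prodMeas μ m) t
      ≤ Real.exp ((Real.exp t - 1) * μ.real D * m) := by
  have hbase : 0 ≤ 1 + (Real.exp t - 1) * μ.real D := by
    nlinarith [Real.exp_pos t, measureReal_nonneg (μ := μ) (s := D),
      measureReal_le_one (μ := μ) (s := D)]
  rw [mgf_sampleCount hD, mul_comm _ (m : ℝ), Real.exp_nat_mul]
  exact pow_le_pow_left₀ hbase (by linarith [Real.add_one_le_exp ((Real.exp t - 1) * μ.real D)]) m

instance prodMeas.instIsProbabilityMeasure (m : ℕ) : IsProbabilityMeasure (prodMeas μ m) := by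
  rw [prodMeas]; infer_instance

lemma prodMeas_le_sampleCount_le (hD : MeasurableSet D) {t : ℝ} (ht : 0 ≤ t) (a : ℝ) (m : ℕ) :
    prodMeas μ m {x | a ≤ sampleCount D x}
      ≤ ENNReal.ofReal (Real.exp (-t * a + (Real.exp t - 1) * μ.real D * m)) := by
  rw [← ofReal_measureReal, Real.exp_add]
  refine ENNReal.ofReal_le_ofReal ((measure_ge_le_exp_mul_mgf a ht
    (integrable_exp_mul_sampleCount hD t m)).trans ?_)
  exact mul_le_mul_of_nonneg_left (mgf_sampleCount_le hD t m) (Real.exp_pos _).le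

lemma prodMeas_sampleCount_le_le (hD : MeasurableSet D) {t : ℝ} (ht : t ≤ 0) (a : ℝ) (m : ℕ) :
    prodMeas μ m {x | sampleCount D x ≤ a}
      ≤ ENNReal.ofReal (Real.exp (-t * a + (Real.exp t - 1) * μ.real D * m)) := by
  rw [← ofReal_measureReal, Real.exp_add]
  refine ENNReal.ofReal_le_ofReal ((measure_le_le_exp_mul_mgf a ht
    (integrable_exp_mul_sampleCount hD t m)).trans ?_)
  exact mul_le_mul_of_nonneg_left (mgf_sampleCount_le hD t m) (Real.exp_pos _).le

lemma prodMeas_le_sampleCount_le_of_le_half (hD : MeasurableSet D) {ε : ℝ}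
    (hp : μ.real D ≤ ε / 2) (m : ℕ) :
    prodMeas μ m {x | 3 * ε / 4 * m ≤ sampleCount D x}
      ≤ ENNReal.ofReal (Real.exp (-(ε * m) / 32)) := by
  refine (prodMeas_le_sampleCount_le hD (by norm_num : (0 : ℝ) ≤ 1 / 2) _ m).trans
    (ENNReal.ofReal_le_ofReal (Real.exp_le_exp.mpr ?_))
  have hc : (Real.exp (1 / 2) - 1) * μ.real D ≤ 11 / 16 * (ε / 2) :=
    mul_le_mul exp_half_sub_one_le hp measureReal_nonneg (by norm_num)
  nlinarith [mul_le_mul_of_nonneg_right hc m.cast_nonneg]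

lemma prodMeas_sampleCount_le_le_of_le (hD : MeasurableSet D) {ε : ℝ} (hε : 0 ≤ ε)
    (hp : ε ≤ μ.real D) (m : ℕ) :
    prodMeas μ m {x | sampleCount D x ≤ 3 * ε / 4 * m}
      ≤ ENNReal.ofReal (Real.exp (-(ε * m) / 32)) := by
  refine (prodMeas_sampleCount_le_le hD (by norm_num : -(3 / 10 : ℝ) ≤ 0) _ m).trans
    (ENNReal.ofReal_le_ofReal (Real.exp_le_exp.mpr ?_))
  have hc : (Real.exp (-(3 / 10)) - 1) * μ.real D ≤ -41 / 160 * ε := by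
    nlinarith [exp_neg_three_tenths_sub_one_le]
  nlinarith [mul_le_mul_of_nonneg_right hc m.cast_nonneg]

end SampleCount

section EmpiricalRisk

variable {Ω : Type*} {k m : ℕ}

def IsEmpRiskMinimizer (B : Fin k → Set Ω) (L : (Fin m → Ω × Bool) → Set Ω) : Prop :=
  ∀ s, ∃ j, L s = B j ∧ ∀ j', empErr (B j) s ≤ empErr (B j') s

/-- The slot `j₀` of the cover holds the event that the good hypothesis `B j₀` looks bad on the
sample; every other slot `j` holds the event that `B j` is bad but looks good. -/
lemma IsEmpRiskMinimizer.setOf_lt_measureReal_subset [MeasurableSpace Ω] {μ : Measure Ω}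
    {B : Fin k → Set Ω} {L : (Fin m → Ω × Bool) → Set Ω} (hL : IsEmpRiskMinimizer B L)
    (C : Set Ω) {ε : ℝ} {j₀ : Fin k} (hj₀ : μ.real (B j₀ ∆ C) ≤ ε) (a : ℝ) :
    {x | ε < μ.real (L (labeled C x) ∆ C)} ⊆
      ⋃ j, Function.update (fun j => {x | ε < μ.real (B j ∆ C) ∧ sampleCount (B j ∆ C) x ≤ a})
        j₀ {x | a ≤ sampleCount (B j₀ ∆ C) x} j := by
  intro x (hx : ε < μ.real (L (labeled C x) ∆ C))
  obtain ⟨j, hLj, hmin⟩ := hL (labeled C x)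
  rw [hLj] at hx
  rw [Set.mem_iUnion]
  by_cases hj₀x : a ≤ sampleCount (B j₀ ∆ C) x
  · exact ⟨j₀, by simpa using hj₀x⟩
  · have hj : j ≠ j₀ := by
      rintro rfl
      linarith
    refine ⟨j, ?_⟩
    rw [Function.update_of_ne hj]
    have hcount := hmin j₀
    rw [empErr_labeled, empErr_labeled] at hcount
    exact ⟨hx, (Nat.cast_le.mpr hcount).trans (not_le.mp hj₀x).le⟩

end EmpiricalRisk

theorem stmt0 {Ω : Type*} [MeasurableSpace Ω] (μ : Measure Ω) [IsProbabilityMeasure μ]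
    (𝒞 : Set (Set Ω)) (h𝒞 : ∀ C ∈ 𝒞, MeasurableSet C)
    (ε : ℝ) (hε : 0 < ε) (k : ℕ) (B : Fin k → Set Ω) (hBmeas : ∀ j, MeasurableSet (B j))
    (hcover : ∀ C ∈ 𝒞, ∃ j, μ (symmDiff C (B j)) ≤ ENNReal.ofReal (ε / 2)) :
    ∀ δ : ℝ, 0 < δ → δ < 1 → ∀ m : ℕ, (32 / ε) * Real.log (k / δ) ≤ m →
      ∀ L : (Fin m → Ω × Bool) → Set Ω,
        (∀ s : Fin m → Ω × Bool, ∃ j : Fin k, L s = B j ∧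
          ∀ j' : Fin k, empErr (B j) s ≤ empErr (B j') s) →
        IsPAC μ 𝒞 m L ε δ := by
  intro δ hδ _ m hm L (hL : IsEmpRiskMinimizer B L) C hC
  obtain ⟨j₀, hj₀⟩ := hcover C hC
  have hD : ∀ j, MeasurableSet (B j ∆ C) := fun j => (hBmeas j).symmDiff (h𝒞 C hC)
  replace hj₀ : μ.real (B j₀ ∆ C) ≤ ε / 2 := by
    rw [symmDiff_comm]; exact ENNReal.toReal_le_of_le_ofReal (by positivity) hj₀
  have hlog : Real.log (k / δ) ≤ ε * m / 32 := by
    rw [div_mul_eq_mul_div, div_le_iff₀ hε] at hm; linarith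
  calc prodMeas μ m {x | ε < μ.real (L (labeled C x) ∆ C)}
      ≤ prodMeas μ m (⋃ j, _) :=
        measure_mono (hL.setOf_lt_measureReal_subset C (by linarith) (3 * ε / 4 * m))
    _ ≤ ∑ j, _ := measure_iUnion_fintype_le _ _
    _ ≤ ∑ _j : Fin k, ENNReal.ofReal (Real.exp (-(ε * m) / 32)) :=
        Finset.sum_le_sum fun j _ => ?_
    _ = ENNReal.ofReal (k * Real.exp (-(ε * m / 32))) := by simp [ENNReal.ofReal_mul, neg_div]
    _ ≤ ENNReal.ofReal δ := ENNReal.ofReal_le_ofReal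
        (mul_exp_neg_le_of_log_div_le (by exact_mod_cast j₀.pos) hδ hlog)
  rcases eq_or_ne j j₀ with rfl | hj
  · simpa using prodMeas_le_sampleCount_le_of_le_half (hD j) hj₀ m
  rw [Function.update_of_ne hj]
  by_cases hbad : ε < μ.real (B j ∆ C)
  · exact (measure_mono fun x hx => hx.2).trans
      (prodMeas_sampleCount_le_le_of_le (hD j) hε.le hbad.le m)
  · simp [hbad]
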